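/- Let q ≥ 2, h ≥ 1 and u ≥ 1 be integers with q^u ≥ 2hq(6q)^h, and let m₀, m₁, m₂, m₃ be integers with q^(u-1) ≤ m₀, m₂, m₃ < q^u and 1 ≤ m₁ < q^u/(hq(6q)^h). Write t(x) = m₃x³ + m₂x² − m₁x + m₀ and let c₀, …, c_{3h} be the coefficients of t(x)^h. Set M = Σ_{i=3}^{3h} s_q(c_i) + s_q(c₂ − 1) − s_q(|c₁| − 1) + s_q(c₀). Then for every integer k > hu + 2h one has s_q(t(q^k)^h) = k(q − 1) + M; in particular M does not depend on k. -/

import Mathlib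

/-!
Write `t = s - m₁ X` with `s = m₃ X³ + m₂ X² + m₀`. Coefficientwise `|t| ≤ s + m₁ X`, and by
induction `|t^h - s^h| ≤ (s + m₁ X)^h - s^h`. Evaluating at `1` bounds every `|c_i|` by
`(s(1) + m₁)^h < q^k`, and `|c_i - [X^i] s^h|` by `h m₁ (s(1) + m₁)^(h-1)`, which the smallness
of `m₁` makes less than `q^((u-1)h) ≤ [X^i] s^h` for `2 ≤ i ≤ 3h`. Hence `c_i > 0` there,
`c₀ = m₀^h ≥ 0` and `c₁ = -h m₀^(h-1) m₁ < 0`. Borrowing one from the `q^(2k)` block, `t(q^k)^h`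
is the concatenation of the length-`k` base-`q` blocks `c₀, q^k + c₁, c₂ - 1, c₃, …, c_{3h}`, and
the block `q^k + c₁ = q^k - 1 - (|c₁| - 1)` has digit sum `k (q - 1) - s_q(|c₁| - 1)`.
-/

open Polynomial

/-- `digitSum q n` is the sum of digits of `n` in base `q`. -/
def digitSum (q n : ℕ) : ℕ := (Nat.digits q n).sum

section DigitSum

variable {q : ℕ}

theorem digitSum_of_lt {d : ℕ} (hd : d < q) : digitSum q d = d := by
  rcases Nat.eq_zero_or_pos d with rfl | hd0
  · simp [digitSum]
  · simp [digitSum, Nat.digits_of_lt q d hd0.ne' hd]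

theorem digitSum_add_pow_mul (hq : 1 < q) {k a : ℕ} (ha : a < q ^ k) (b : ℕ) :
    digitSum q (a + q ^ k * b) = digitSum q a + digitSum q b := by
  rcases Nat.eq_zero_or_pos b with rfl | hb
  · simp [digitSum]
  have hlen : (Nat.digits q a).length ≤ k := (Nat.digits_length_le_iff hq a).2 ha
  have := Nat.digits_append_zeroes_append_digits (n := a) (k := k - (Nat.digits q a).length)
    hq hb
  rw [Nat.add_sub_cancel' hlen] at this
  simp [digitSum, ← this]

theorem digitSum_add_mul (hq : 1 < q) {d : ℕ} (hd : d < q) (b : ℕ) :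
    digitSum q (d + q * b) = d + digitSum q b := by
  have := digitSum_add_pow_mul hq (k := 1) (by rwa [pow_one]) b
  rwa [pow_one, digitSum_of_lt hd] at this

theorem digitSum_sum_mul_pow (hq : 1 < q) {k : ℕ} (n : ℕ) {f : ℕ → ℕ}
    (hf : ∀ i, f i < q ^ k) :
    digitSum q (∑ i ∈ Finset.range n, f i * (q ^ k) ^ i) =
      ∑ i ∈ Finset.range n, digitSum q (f i) := by
  induction n generalizing f with
  | zero => simp [digitSum]
  | succ n ih =>
    have hshift : ∑ i ∈ Finset.range (n + 1), f i * (q ^ k) ^ i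
        = f 0 + q ^ k * ∑ i ∈ Finset.range n, f (i + 1) * (q ^ k) ^ i := by
      rw [Finset.sum_range_succ', Finset.mul_sum, pow_zero, mul_one, add_comm]
      exact congrArg _ (Finset.sum_congr rfl fun i _ => by ring)
    rw [hshift, digitSum_add_pow_mul hq (hf 0), ih fun i => hf (i + 1), Finset.sum_range_succ' _ n,
      add_comm]

theorem digitSum_pow_sub_one_sub_add (hq : 1 < q) {k a : ℕ} (ha : a < q ^ k) :
    digitSum q (q ^ k - 1 - a) + digitSum q a = k * (q - 1) := by
  induction k generalizing a with
  | zero => simp_all [digitSum]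
  | succ k ih =>
    have hq0 : 0 < q := by omega
    have hdiv : a / q < q ^ k := by
      rw [Nat.div_lt_iff_lt_mul hq0, ← pow_succ]; exact ha
    have hmod : a % q < q := Nat.mod_lt a hq0
    have hcompl : q ^ (k + 1) - 1 - a = (q - 1 - a % q) + q * (q ^ k - 1 - a / q) := by
      have hle : q * (a / q + 1) ≤ q * q ^ k := Nat.mul_le_mul_left q hdiv
      have := Nat.mod_add_div a q
      rw [pow_succ', Nat.mul_sub, Nat.mul_sub, mul_add] at *
      omega
    have hhi := digitSum_add_mul hq (show q - 1 - a % q < q by omega) (q ^ k - 1 - a / q)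
    have hlo := digitSum_add_mul hq hmod (a / q)
    rw [Nat.mod_add_div] at hlo
    rw [hcompl, hhi, hlo, add_mul, one_mul]
    have := ih hdiv
    omega

theorem digitSum_toNat_pow_add_add (hq : 1 < q) {k : ℕ} {c : ℤ} (hc : -(q : ℤ) ^ k < c)
    (hc0 : c < 0) :
    (digitSum q ((q : ℤ) ^ k + c).toNat : ℤ) + digitSum q (|c| - 1).toNat = k * ((q : ℤ) - 1) := by
  set a := (|c| - 1).toNat
  have ha : (a : ℤ) = |c| - 1 := Int.toNat_of_nonneg (by rw [abs_of_neg hc0]; linarith)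
  have halt : a < q ^ k := by
    zify; rw [ha, abs_of_neg hc0]; linarith
  have hcompl : ((q : ℤ) ^ k + c).toNat = q ^ k - 1 - a := by
    zify
    rw [Int.toNat_of_nonneg (by linarith), Nat.sub_sub, Nat.cast_sub (by omega)]
    push_cast
    rw [ha, abs_of_neg hc0]
    ring
  rw [hcompl, ← Nat.cast_add, digitSum_pow_sub_one_sub_add hq halt, Nat.cast_mul,
    Nat.cast_sub hq.le]
  rfl

theorem digitSum_toNat_eval_pow (hq : 1 < q) {k n : ℕ} {p : ℤ[X]} (hn : p.natDegree < n)
    (hp : ∀ i, 0 ≤ p.coeff i ∧ p.coeff i < (q : ℤ) ^ k) :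
    digitSum q (p.eval ((q : ℤ) ^ k)).toNat =
      ∑ i ∈ Finset.range n, digitSum q (p.coeff i).toNat := by
  have heval : p.eval ((q : ℤ) ^ k) =
      ((∑ i ∈ Finset.range n, (p.coeff i).toNat * (q ^ k) ^ i : ℕ) : ℤ) := by
    rw [eval_eq_sum_range' hn]
    push_cast
    exact Finset.sum_congr rfl fun i _ => by rw [Int.toNat_of_nonneg (hp i).1]
  rw [heval, Int.toNat_natCast, digitSum_sum_mul_pow hq n fun i => ?_]
  exact (Int.toNat_lt' (by positivity)).2 (by exact_mod_cast (hp i).2)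

theorem digitSum_toNat_eval_pow_of_coeff_one_neg (hq : 1 < q) {k d : ℕ} {p : ℤ[X]}
    (hd : p.natDegree ≤ d) (hlt : ∀ i, |p.coeff i| < (q : ℤ) ^ k) (h0 : 0 ≤ p.coeff 0)
    (h1 : p.coeff 1 < 0) (h2 : 0 < p.coeff 2)
    (hi : ∀ i, 3 ≤ i → i ≤ d → 0 ≤ p.coeff i) :
    (digitSum q (p.eval ((q : ℤ) ^ k)).toNat : ℤ) = k * ((q : ℤ) - 1) +
      ((∑ i ∈ Finset.Icc 3 d, (digitSum q (p.coeff i).toNat : ℤ))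
        + (digitSum q (p.coeff 2 - 1).toNat : ℤ)
        - (digitSum q (|p.coeff 1| - 1).toNat : ℤ)
        + (digitSum q (p.coeff 0).toNat : ℤ)) := by
  set Q : ℤ := (q : ℤ) ^ k
  have hd2 : 2 ≤ d := (le_natDegree_of_ne_zero h2.ne').trans hd
  -- `B(Q) = p(Q)`, and borrowing one from the `X²` coefficient puts all coefficients of `B`
  -- in `[0, Q)`.
  set B : ℤ[X] := p + C Q * X - X ^ 2 with hBdef
  have hB : ∀ i,
      B.coeff i = p.coeff i + (if i = 1 then Q else 0) - (if i = 2 then 1 else 0) := fun i => by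
    simp only [hBdef, coeff_sub, coeff_add, coeff_C_mul_X, coeff_X_pow]
  have hB0 : B.coeff 0 = p.coeff 0 := by simp [hB]
  have hB1 : B.coeff 1 = p.coeff 1 + Q := by simp [hB]
  have hB2 : B.coeff 2 = p.coeff 2 - 1 := by simp [hB]
  have hB3 : ∀ i, 3 ≤ i → B.coeff i = p.coeff i := fun i hi => by
    rw [hB, if_neg (by omega), if_neg (by omega), add_zero, sub_zero]
  have hBdeg : B.natDegree < d + 1 := by
    refine Nat.lt_succ_of_le (natDegree_le_iff_coeff_eq_zero.2 fun i hi => ?_)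
    rw [hB3 i (by omega), coeff_eq_zero_of_natDegree_lt (hd.trans_lt hi)]
  have hBeval : B.eval Q = p.eval Q := by
    simp only [hBdef, eval_sub, eval_add, eval_mul, eval_C, eval_X, eval_pow]; ring
  have hBcoeff : ∀ i, 0 ≤ B.coeff i ∧ B.coeff i < Q := by
    intro i
    have hpi := abs_lt.1 (hlt i)
    rcases (by omega : i = 0 ∨ i = 1 ∨ i = 2 ∨ 3 ≤ i) with rfl | rfl | rfl | hi3
    · rw [hB0]; constructor <;> linarith
    · rw [hB1]; constructor <;> linarith
    · rw [hB2]; constructor <;> linarith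
    · rw [hB3 i hi3]
      refine ⟨?_, hpi.2⟩
      by_cases hid : i ≤ d
      · exact hi i hi3 hid
      · rw [coeff_eq_zero_of_natDegree_lt (by omega)]
  have hcompl := digitSum_toNat_pow_add_add hq (abs_lt.1 (hlt 1)).1 h1
  rw [← hBeval, digitSum_toNat_eval_pow hq hBdeg hBcoeff, Finset.range_eq_Ico,
    Finset.sum_eq_sum_Ico_succ_bot (by omega), Finset.sum_eq_sum_Ico_succ_bot (by omega),
    Finset.sum_eq_sum_Ico_succ_bot (by omega), Finset.Ico_add_one_right_eq_Icc,
    Finset.sum_congr rfl fun i hi => by rw [hB3 i (Finset.mem_Icc.1 hi).1], hB0, hB1, hB2,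
    add_comm (p.coeff 1)]
  push_cast
  linarith

end DigitSum

namespace Polynomial

section Nonneg

variable {R : Type*} [CommSemiring R] [PartialOrder R] [IsOrderedRing R] {p r : R[X]}

theorem coeff_mul_nonneg (hp : ∀ i, 0 ≤ p.coeff i) (hr : ∀ i, 0 ≤ r.coeff i) (i : ℕ) :
    0 ≤ (p * r).coeff i := by
  rw [coeff_mul]
  exact Finset.sum_nonneg fun x _ => mul_nonneg (hp _) (hr _)

theorem coeff_pow_nonneg (hp : ∀ i, 0 ≤ p.coeff i) (n i : ℕ) : 0 ≤ (p ^ n).coeff i := by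
  induction n generalizing i with
  | zero => rw [pow_zero, coeff_one]; split_ifs <;> simp
  | succ n ih => rw [pow_succ]; exact coeff_mul_nonneg ih hp i

theorem coeff_le_eval_one (hp : ∀ i, 0 ≤ p.coeff i) (i : ℕ) : p.coeff i ≤ p.eval 1 := by
  rw [eval_eq_sum, sum_def]
  by_cases hi : i ∈ p.support
  · simpa using Finset.single_le_sum (f := fun j => p.coeff j * 1 ^ j)
      (fun j _ => by simpa using hp j) hi
  · rw [notMem_support_iff.1 hi]
    exact Finset.sum_nonneg fun j _ => by simpa using hp j

theorem coeff_mul_le_coeff_mul_add (hp : ∀ i, 0 ≤ p.coeff i) (hr : ∀ i, 0 ≤ r.coeff i)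
    (i j : ℕ) : p.coeff i * r.coeff j ≤ (p * r).coeff (i + j) := by
  rw [coeff_mul]
  exact Finset.single_le_sum (f := fun x : ℕ × ℕ => p.coeff x.1 * r.coeff x.2)
    (fun x _ => mul_nonneg (hp _) (hr _))
    (show (i, j) ∈ Finset.HasAntidiagonal.antidiagonal (i + j) from
      Finset.HasAntidiagonal.mem_antidiagonal.2 rfl)

theorem coeff_pow_le_coeff_pow_mul (hp : ∀ i, 0 ≤ p.coeff i) (e n : ℕ) :
    p.coeff e ^ n ≤ (p ^ n).coeff (e * n) := by
  induction n with
  | zero => simp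
  | succ n ih =>
    rw [pow_succ, pow_succ, mul_add_one]
    exact (mul_le_mul_of_nonneg_right ih (hp e)).trans
      (coeff_mul_le_coeff_mul_add (coeff_pow_nonneg hp n) hp _ _)

theorem pow_le_coeff_pow {L : R} (hp : ∀ i, 0 ≤ p.coeff i) (hL : 0 ≤ L) (h0 : L ≤ p.coeff 0)
    (h2 : L ≤ p.coeff 2) (h3 : L ≤ p.coeff 3) {n i : ℕ} (hi2 : 2 ≤ i) (hin : i ≤ 3 * n) :
    L ^ n ≤ (p ^ n).coeff i := by
  obtain ⟨a, b, hab, habn⟩ : ∃ a b, 3 * a + 2 * b = i ∧ a + b ≤ n := by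
    rcases (by omega : i % 3 = 0 ∨ i % 3 = 1 ∨ i % 3 = 2) with h | h | h
    · exact ⟨i / 3, 0, by omega, by omega⟩
    · exact ⟨i / 3 - 1, 2, by omega, by omega⟩
    · exact ⟨i / 3, 1, by omega, by omega⟩
  obtain ⟨c, rfl⟩ := Nat.exists_eq_add_of_le habn
  have hpow := coeff_pow_nonneg hp
  have h3a : L ^ a ≤ (p ^ a).coeff (3 * a) :=
    (pow_le_pow_left₀ hL h3 a).trans (by simpa [mul_comm] using coeff_pow_le_coeff_pow_mul hp 3 a)
  have h2b : L ^ b ≤ (p ^ b).coeff (2 * b) :=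
    (pow_le_pow_left₀ hL h2 b).trans (by simpa [mul_comm] using coeff_pow_le_coeff_pow_mul hp 2 b)
  have h0c : L ^ c ≤ (p ^ c).coeff 0 :=
    (pow_le_pow_left₀ hL h0 c).trans (by simpa using coeff_pow_le_coeff_pow_mul hp 0 c)
  calc L ^ (a + b + c) = L ^ a * L ^ b * L ^ c := by rw [pow_add, pow_add]
    _ ≤ (p ^ a).coeff (3 * a) * (p ^ b).coeff (2 * b) * (p ^ c).coeff 0 :=
      mul_le_mul (mul_le_mul h3a h2b (pow_nonneg hL b) (hpow _ _)) h0c (pow_nonneg hL c)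
        (mul_nonneg (hpow _ _) (hpow _ _))
    _ ≤ (p ^ a * p ^ b).coeff (3 * a + 2 * b) * (p ^ c).coeff 0 :=
      mul_le_mul_of_nonneg_right (coeff_mul_le_coeff_mul_add (hpow a) (hpow b) _ _) (hpow _ _)
    _ ≤ (p ^ a * p ^ b * p ^ c).coeff (3 * a + 2 * b + 0) :=
      coeff_mul_le_coeff_mul_add (coeff_mul_nonneg (hpow a) (hpow b)) (hpow c) _ _
    _ = (p ^ (a + b + c)).coeff i := by rw [← pow_add, ← pow_add, add_zero, hab]

end Nonneg

section Majorant

variable {R : Type*} [CommRing R] [LinearOrder R] [IsStrictOrderedRing R]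

def MajorizedBy (p P : R[X]) : Prop := ∀ i, |p.coeff i| ≤ P.coeff i

namespace MajorizedBy

variable {p r P Q : R[X]}

theorem coeff_nonneg (h : p.MajorizedBy P) (i : ℕ) : 0 ≤ P.coeff i := (abs_nonneg _).trans (h i)

theorem refl_of_coeff_nonneg (h : ∀ i, 0 ≤ p.coeff i) : p.MajorizedBy p :=
  fun i => (abs_of_nonneg (h i)).le

theorem sub (hp : p.MajorizedBy P) (hr : r.MajorizedBy Q) :
    (p - r).MajorizedBy (P + Q) := fun i => by
  simpa only [coeff_sub, coeff_add] using (abs_sub _ _).trans (add_le_add (hp i) (hr i))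

theorem add (hp : p.MajorizedBy P) (hr : r.MajorizedBy Q) :
    (p + r).MajorizedBy (P + Q) := fun i => by
  simpa only [coeff_add] using (abs_add_le _ _).trans (add_le_add (hp i) (hr i))

theorem mul (hp : p.MajorizedBy P) (hr : r.MajorizedBy Q) :
    (p * r).MajorizedBy (P * Q) := fun i => by
  rw [coeff_mul, coeff_mul]
  refine (Finset.abs_sum_le_sum_abs _ _).trans (Finset.sum_le_sum fun x _ => ?_)
  rw [abs_mul]
  exact mul_le_mul (hp _) (hr _) (abs_nonneg _) (hp.coeff_nonneg _)

theorem pow (hp : p.MajorizedBy P) (n : ℕ) : (p ^ n).MajorizedBy (P ^ n) := by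
  induction n with
  | zero => exact refl_of_coeff_nonneg fun i => by rw [pow_zero, coeff_one]; split_ifs <;> simp
  | succ n ih => rw [pow_succ, pow_succ]; exact ih.mul hp

theorem pow_sub_pow (hp : p.MajorizedBy P) (hr : r.MajorizedBy Q)
    (hpr : (p - r).MajorizedBy (P - Q)) (n : ℕ) : (p ^ n - r ^ n).MajorizedBy (P ^ n - Q ^ n) := by
  induction n with
  | zero => simpa using refl_of_coeff_nonneg (p := (0 : R[X])) (by simp)
  | succ n ih =>
    have key : ∀ a b : R[X], a ^ (n + 1) - b ^ (n + 1) = a * (a ^ n - b ^ n) + (a - b) * b ^ n :=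
      fun a b => by ring
    rw [key, key]
    exact (hp.mul ih).add (hpr.mul (hr.pow n))

theorem abs_coeff_le_eval_one (h : p.MajorizedBy P) (i : ℕ) : |p.coeff i| ≤ P.eval 1 :=
  (h i).trans (coeff_le_eval_one h.coeff_nonneg i)

end MajorizedBy

variable {s : R[X]} {m : R}

theorem sub_C_mul_X_majorizedBy (hs : ∀ i, 0 ≤ s.coeff i) (hm : 0 ≤ m) :
    (s - C m * X).MajorizedBy (s + C m * X) :=
  (MajorizedBy.refl_of_coeff_nonneg hs).sub (MajorizedBy.refl_of_coeff_nonneg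
    fun i => by rw [coeff_C_mul_X]; split_ifs <;> simp [hm])

theorem abs_coeff_pow_sub_C_mul_X_le (hs : ∀ i, 0 ≤ s.coeff i) (hm : 0 ≤ m) (n i : ℕ) :
    |((s - C m * X) ^ n).coeff i| ≤ (s.eval 1 + m) ^ n := by
  simpa using ((sub_C_mul_X_majorizedBy hs hm).pow n).abs_coeff_le_eval_one i

theorem coeff_pow_sub_le_coeff_pow_sub_C_mul_X (hs : ∀ i, 0 ≤ s.coeff i) (hm : 0 ≤ m)
    (n i : ℕ) :
    (s ^ n).coeff i - n * m * (s.eval 1 + m) ^ (n - 1) ≤ ((s - C m * X) ^ n).coeff i := by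
  have hself := MajorizedBy.refl_of_coeff_nonneg hs
  have hdiff : ((s - C m * X) - s).MajorizedBy ((s + C m * X) - s) := by
    convert sub_C_mul_X_majorizedBy (s := 0) (fun i => by simp) hm using 1 <;> ring
  have hmaj := (sub_C_mul_X_majorizedBy hs hm).pow_sub_pow hself hdiff n
  have hS : 0 ≤ s.eval 1 := (hs 0).trans (coeff_le_eval_one hs 0)
  have hgap : (s.eval 1 + m) ^ n - s.eval 1 ^ n ≤ n * m * (s.eval 1 + m) ^ (n - 1) := by
    have := abs_pow_sub_pow_le (s.eval 1 + m) (s.eval 1) n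
    rw [add_sub_cancel_left, abs_of_nonneg hm, abs_of_nonneg (add_nonneg hS hm), abs_of_nonneg hS,
      max_eq_left (by linarith)] at this
    linarith [le_abs_self ((s.eval 1 + m) ^ n - s.eval 1 ^ n)]
  have := hmaj.abs_coeff_le_eval_one i
  rw [coeff_sub, eval_sub, eval_pow, eval_pow, eval_add] at this
  simp only [eval_mul, eval_C, eval_X, mul_one] at this
  linarith [neg_abs_le ((((s - C m * X) ^ n).coeff i - (s ^ n).coeff i))]

theorem coeff_pow_sub_C_mul_X_pos (hs : ∀ i, 0 ≤ s.coeff i) (hm : 0 ≤ m) {L : R} (hL : 0 ≤ L)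
    (h0 : L ≤ s.coeff 0) (h2 : L ≤ s.coeff 2) (h3 : L ≤ s.coeff 3) {n : ℕ}
    (hsmall : n * m * (s.eval 1 + m) ^ (n - 1) < L ^ n) {i : ℕ} (hi2 : 2 ≤ i)
    (hin : i ≤ 3 * n) :
    0 < ((s - C m * X) ^ n).coeff i := by
  have := pow_le_coeff_pow hs hL h0 h2 h3 hi2 hin
  have := coeff_pow_sub_le_coeff_pow_sub_C_mul_X hs hm n i
  linarith

end Majorant

theorem coeff_pow_one {R : Type*} [CommSemiring R] (p : R[X]) (n : ℕ) :
    (p ^ n).coeff 1 = n * p.coeff 0 ^ (n - 1) * p.coeff 1 := by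
  have := coeff_derivative (p ^ n) 0
  rw [derivative_pow, coeff_zero_eq_eval_zero] at this
  simpa [← coeff_zero_eq_eval_zero, coeff_derivative] using this.symm

end Polynomial

theorem mul_mul_pow_lt_pow_pow {q u h : ℕ} {m A : ℤ} (hq : 0 < q) (hA0 : 0 < A)
    (hA : A ≤ 4 * (q : ℤ) ^ u) (hmq : m * (h * q * (6 * q) ^ h) < (q : ℤ) ^ u) :
    h * m * A ^ (h - 1) < ((q : ℤ) ^ (u - 1)) ^ h := by
  rcases h with _ | n
  · simp
  have hqZ : (1 : ℤ) ≤ q := by exact_mod_cast hq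
  have hqu : (q : ℤ) ^ u ≤ (q : ℤ) ^ (u - 1) * q := by
    rw [← pow_succ]; exact pow_le_pow_right₀ hqZ (by omega)
  have h46 : (4 : ℤ) ^ n ≤ q * 6 ^ (n + 1) :=
    calc (4 : ℤ) ^ n ≤ 6 ^ n := pow_le_pow_left₀ (by norm_num) (by norm_num) n
      _ ≤ 1 * 6 ^ (n + 1) := by rw [one_mul]; exact pow_le_pow_right₀ (by norm_num) (by omega)
      _ ≤ q * 6 ^ (n + 1) := by gcongr
  refine lt_of_mul_lt_mul_right ?_ (by positivity : (0 : ℤ) ≤ q * (6 * q) ^ (n + 1))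
  calc ((n + 1 : ℕ) : ℤ) * m * A ^ (n + 1 - 1) * (q * (6 * q) ^ (n + 1))
      = m * ((n + 1 : ℕ) * q * (6 * q) ^ (n + 1)) * A ^ n := by rw [Nat.add_sub_cancel]; ring
    _ < (q : ℤ) ^ u * A ^ n := mul_lt_mul_of_pos_right hmq (pow_pos hA0 n)
    _ ≤ (q : ℤ) ^ u * (4 * (q : ℤ) ^ u) ^ n := by gcongr
    _ = 4 ^ n * ((q : ℤ) ^ u) ^ (n + 1) := by ring
    _ ≤ 4 ^ n * ((q : ℤ) ^ (u - 1) * q) ^ (n + 1) := by gcongr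
    _ = ((q : ℤ) ^ (u - 1)) ^ (n + 1) * (4 ^ n * q ^ (n + 1)) := by ring
    _ ≤ ((q : ℤ) ^ (u - 1)) ^ (n + 1) * ((q * 6 ^ (n + 1)) * q ^ (n + 1)) := by gcongr
    _ = ((q : ℤ) ^ (u - 1)) ^ (n + 1) * (q * (6 * q) ^ (n + 1)) := by ring

theorem pow_lt_pow_of_lt_four_mul_pow {q u h k : ℕ} {A : ℤ} (hq : 2 ≤ q) (hA0 : 0 ≤ A)
    (hA : A < 4 * (q : ℤ) ^ u) (hk : h * u + 2 * h < k) : A ^ h < (q : ℤ) ^ k := by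
  have hqZ : (2 : ℤ) ≤ q := by exact_mod_cast hq
  have h4 : (4 : ℤ) ≤ q ^ 2 := by nlinarith
  calc A ^ h ≤ ((q : ℤ) ^ (u + 2)) ^ h := by
        refine pow_le_pow_left₀ hA0 (hA.le.trans ?_) h
        rw [pow_add, mul_comm]
        exact mul_le_mul_of_nonneg_left h4 (pow_nonneg (by linarith) u)
    _ < (q : ℤ) ^ k := by
        rw [← pow_mul]
        exact pow_lt_pow_right₀ (by linarith) (by rw [add_mul, mul_comm u]; omega)

theorem digitSum_of_t_pow_h_at_large_power_general
    (q h u : ℕ) (hq : 2 ≤ q) (hh : 1 ≤ h)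
    (m₀ m₁ m₂ m₃ : ℤ)
    (hm₀ : (q : ℤ) ^ (u - 1) ≤ m₀) (hm₀' : m₀ < (q : ℤ) ^ u)
    (hm₂ : (q : ℤ) ^ (u - 1) ≤ m₂) (hm₂' : m₂ < (q : ℤ) ^ u)
    (hm₃ : (q : ℤ) ^ (u - 1) ≤ m₃) (hm₃' : m₃ < (q : ℤ) ^ u)
    (hm₁ : 1 ≤ m₁)
    (hm₁' : (m₁ : ℝ) < (q : ℝ) ^ u / ((h : ℝ) * q * (6 * q : ℝ) ^ h))
    (t : Polynomial ℤ)
    (ht : t = C m₃ * X ^ 3 + C m₂ * X ^ 2 - C m₁ * X + C m₀)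
    (M : ℤ)
    (hM : M = (∑ i ∈ Finset.Icc 3 (3 * h), (digitSum q ((t ^ h).coeff i).toNat : ℤ))
        + (digitSum q ((t ^ h).coeff 2 - 1).toNat : ℤ)
        - (digitSum q (|(t ^ h).coeff 1| - 1).toNat : ℤ)
        + (digitSum q ((t ^ h).coeff 0).toNat : ℤ)) :
    ∀ k : ℕ, h * u + 2 * h < k →
      (digitSum q ((t.eval ((q : ℤ) ^ k)) ^ h).toNat : ℤ) = k * ((q : ℤ) - 1) + M := by
  intro k hk
  have hq1 : (1 : ℤ) ≤ q := by exact_mod_cast (by omega : 1 ≤ q)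
  have hL : (1 : ℤ) ≤ (q : ℤ) ^ (u - 1) := one_le_pow₀ hq1
  set s : ℤ[X] := C m₃ * X ^ 3 + C m₂ * X ^ 2 + C m₀ with hs_def
  have hts : t = s - C m₁ * X := by rw [ht]; ring
  obtain ⟨hs0, hs2, hs3, hs_eval⟩ : s.coeff 0 = m₀ ∧ s.coeff 2 = m₂ ∧ s.coeff 3 = m₃ ∧
      s.eval 1 = m₃ + m₂ + m₀ := by
    simp [hs_def, coeff_C, -eq_intCast]
  have hs : ∀ i, 0 ≤ s.coeff i := fun i => by
    simp only [hs_def, coeff_add, coeff_C_mul_X_pow, coeff_C]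
    split_ifs <;> linarith
  have hm₁q : m₁ * (h * q * (6 * q) ^ h) < (q : ℤ) ^ u := by
    exact_mod_cast (lt_div_iff₀ (by positivity)).1 hm₁'
  have hA : s.eval 1 + m₁ < 4 * (q : ℤ) ^ u := by
    have hD : (1 : ℤ) ≤ h * q * (6 * q) ^ h := by
      exact one_le_mul_of_one_le_of_one_le
        (one_le_mul_of_one_le_of_one_le (by exact_mod_cast hh) hq1) (one_le_pow₀ (by linarith))
    linarith [le_mul_of_one_le_right (by linarith : (0 : ℤ) ≤ m₁) hD]
  have hlt : ∀ i, |(t ^ h).coeff i| < (q : ℤ) ^ k := fun i =>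
    hts ▸ (abs_coeff_pow_sub_C_mul_X_le hs (by linarith) h i).trans_lt
      (pow_lt_pow_of_lt_four_mul_pow hq (by linarith) hA hk)
  have hpos : ∀ i, 2 ≤ i → i ≤ 3 * h → 0 < (t ^ h).coeff i := fun i hi2 hi =>
    hts ▸ coeff_pow_sub_C_mul_X_pos hs (by linarith) (by linarith) (hs0 ▸ hm₀) (hs2 ▸ hm₂)
      (hs3 ▸ hm₃) (mul_mul_pow_lt_pow_pow (by omega) (by linarith) hA.le hm₁q) hi2 hi
  obtain ⟨ht0, ht1⟩ : t.coeff 0 = m₀ ∧ t.coeff 1 = -m₁ := by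
    simp [ht, coeff_C, -eq_intCast]
  have hdeg : (t ^ h).natDegree ≤ 3 * h := by
    rw [mul_comm]; exact natDegree_pow_le_of_le h (by rw [ht]; compute_degree)
  rw [hM, ← eval_pow]
  refine digitSum_toNat_eval_pow_of_coeff_one_neg hq hdeg hlt ?_ ?_
    (hpos 2 le_rfl (by omega)) fun i hi3 hi => (hpos i (by omega) hi).le
  · rw [coeff_zero_eq_eval_zero, eval_pow, ← coeff_zero_eq_eval_zero, ht0]
    exact pow_nonneg (by linarith) h
  · rw [coeff_pow_one, ht0, ht1]
    exact mul_neg_of_pos_of_neg (mul_pos (by exact_mod_cast hh) (pow_pos (by linarith) _))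
      (by linarith)

theorem digitSum_of_t_pow_h_at_large_power
    (q h u : ℕ) (hq : 2 ≤ q) (hh : 1 ≤ h) (hu : 1 ≤ u)
    (hqu : 2 * h * q * (6 * q) ^ h ≤ q ^ u)
    (m₀ m₁ m₂ m₃ : ℤ)
    (hm₀ : (q : ℤ) ^ (u - 1) ≤ m₀) (hm₀' : m₀ < (q : ℤ) ^ u)
    (hm₂ : (q : ℤ) ^ (u - 1) ≤ m₂) (hm₂' : m₂ < (q : ℤ) ^ u)
    (hm₃ : (q : ℤ) ^ (u - 1) ≤ m₃) (hm₃' : m₃ < (q : ℤ) ^ u)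
    (hm₁ : 1 ≤ m₁)
    (hm₁' : (m₁ : ℝ) < (q : ℝ) ^ u / ((h : ℝ) * q * (6 * q : ℝ) ^ h))
    (t : Polynomial ℤ)
    (ht : t = C m₃ * X ^ 3 + C m₂ * X ^ 2 - C m₁ * X + C m₀)
    (M : ℤ)
    (hM : M = (∑ i ∈ Finset.Icc 3 (3 * h), (digitSum q ((t ^ h).coeff i).toNat : ℤ))
        + (digitSum q ((t ^ h).coeff 2 - 1).toNat : ℤ)
        - (digitSum q (|(t ^ h).coeff 1| - 1).toNat : ℤ)
        + (digitSum q ((t ^ h).coeff 0).toNat : ℤ)) :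
    ∀ k : ℕ, h * u + 2 * h < k →
      (digitSum q ((t.eval ((q : ℤ) ^ k)) ^ h).toNat : ℤ) = k * ((q : ℤ) - 1) + M :=
  digitSum_of_t_pow_h_at_large_power_general q h u hq hh m₀ m₁ m₂ m₃ hm₀ hm₀' hm₂ hm₂' hm₃ hm₃' hm₁
    hm₁' t ht M hM
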